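/- Let B be an n × n random matrix whose entries are independent Bernoulli random variables with mean p, and let ε ∈ (0,1]. Then with probability at least 1 − 2·exp(−εn/4) there exist sets I, J ⊆ {1,...,n} with |I| ≤ εn and |J| ≤ εn such that the matrix B̃ obtained from B by setting every entry with index in I × J to zero has the property that every row and every column of B̃ contains at most 21pn + 4·ln ε^{−1} ones. -/

import Mathlib

/-!
Let `k = ⌊21pn + 4 ln ε⁻¹⌋` and call a row or column heavy if it has more than `k` ones. Take for
`I` the heavy rows together with the rows having a one in a heavy column, and for `J` symmetrically.
Every one of a heavy row then sits in a column of `J`, so heavy rows are emptied, while the other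
rows only lose ones; and `|I|, |J|` are at most the total number of ones in heavy rows and heavy
columns.

The number `R` of ones in a row satisfies `P(R ≥ j) ≤ C(n,j) pʲ`, and the choice of `k` makes
`E exp(R·1{R > k}) ≤ 1 + ∑_{j > k} eʲ C(n,j) pʲ ≤ 1 + ε/4`. Rows are independent, so by Markov's
inequality the ones in heavy rows number at least `εn/2` with probability at most
`(1 + ε/4)ⁿ e^{-εn/2} ≤ e^{-εn/4}`; likewise for columns.
-/

open MeasureTheory ProbabilityTheory
open scoped ENNReal NNReal

/-- The matrix obtained from `B` by zeroing out all entries in the `I × J` submatrix. -/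
noncomputable def zeroSub {n : ℕ} (B : Matrix (Fin n) (Fin n) ℝ) (I J : Finset (Fin n)) :
    Matrix (Fin n) (Fin n) ℝ :=
  Matrix.of fun i j => if i ∈ I ∧ j ∈ J then 0 else B i j

open Finset Real
open scoped Nat Matrix

noncomputable section

section Combinatorics

variable {ι κ : Type*} [Fintype ι] [Fintype κ]

def countOnes (v : κ → ℝ) : ℕ := #{j | v j = 1}

def heavyRows (A : Matrix ι κ ℝ) (k : ℕ) : Finset ι := {i | k < countOnes (A i)}

def heavyMass (A : Matrix ι κ ℝ) (k : ℕ) : ℕ := ∑ i ∈ heavyRows A k, countOnes (A i)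

def regularizingRows [DecidableEq ι] (A : Matrix ι κ ℝ) (k : ℕ) : Finset ι :=
  heavyRows A k ∪ (heavyRows Aᵀ k).biUnion fun j => {i | A i j = 1}

lemma card_heavyRows_le_heavyMass (A : Matrix ι κ ℝ) (k : ℕ) :
    #(heavyRows A k) ≤ heavyMass A k := by
  rw [card_eq_sum_ones]
  refine sum_le_sum fun i hi => ?_
  have : k < countOnes (A i) := (mem_filter.1 hi).2
  omega

lemma card_regularizingRows_le [DecidableEq ι] (A : Matrix ι κ ℝ) (k : ℕ) :
    #(regularizingRows A k) ≤ heavyMass A k + heavyMass Aᵀ k :=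
  (card_union_le _ _).trans <| add_le_add (card_heavyRows_le_heavyMass A k) card_biUnion_le

end Combinatorics

section ZeroSub

variable {n : ℕ}

lemma zeroSub_transpose (A : Matrix (Fin n) (Fin n) ℝ) (I J : Finset (Fin n)) :
    (zeroSub A I J)ᵀ = zeroSub Aᵀ J I := by
  ext i j
  simp only [zeroSub, Matrix.transpose_apply, Matrix.of_apply, and_comm]

lemma countOnes_zeroSub_le (A : Matrix (Fin n) (Fin n) ℝ) (I J : Finset (Fin n)) (i : Fin n) :
    countOnes (zeroSub A I J i) ≤ countOnes (A i) := by
  refine card_le_card (monotone_filter_right _ fun j _ hj => ?_)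
  change (if i ∈ I ∧ j ∈ J then 0 else A i j) = 1 at hj
  split_ifs at hj with h
  · norm_num at hj
  · exact hj

lemma countOnes_zeroSub_eq_zero {A : Matrix (Fin n) (Fin n) ℝ} {I J : Finset (Fin n)} {i : Fin n}
    (hi : i ∈ I) (hJ : ∀ j, A i j = 1 → j ∈ J) : countOnes (zeroSub A I J i) = 0 := by
  refine card_eq_zero.2 (filter_eq_empty_iff.2 fun j _ => ?_)
  simp only [zeroSub, Matrix.of_apply]
  split_ifs with h
  · norm_num
  · exact fun hj => h ⟨hi, hJ j hj⟩

lemma countOnes_zeroSub_regularizingRows_le (A : Matrix (Fin n) (Fin n) ℝ) (k : ℕ) (i : Fin n) :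
    countOnes (zeroSub A (regularizingRows A k) (regularizingRows Aᵀ k) i) ≤ k := by
  by_cases hi : i ∈ heavyRows A k
  · refine (countOnes_zeroSub_eq_zero (mem_union_left _ hi) fun j hj => ?_).trans_le k.zero_le
    exact mem_union_right _ (mem_biUnion.2 ⟨i, hi, mem_filter.2 ⟨mem_univ _, hj⟩⟩)
  · exact (countOnes_zeroSub_le A _ _ i).trans (not_lt.1 fun h => hi (mem_filter.2 ⟨mem_univ _, h⟩))

lemma countOnes_transpose_zeroSub_regularizingRows_le (A : Matrix (Fin n) (Fin n) ℝ) (k : ℕ)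
    (j : Fin n) :
    countOnes ((zeroSub A (regularizingRows A k) (regularizingRows Aᵀ k))ᵀ j) ≤ k := by
  rw [zeroSub_transpose]
  exact countOnes_zeroSub_regularizingRows_le Aᵀ k j

end ZeroSub

lemma exists_zeroSub_countOnes_le {n : ℕ} (A : Matrix (Fin n) (Fin n) ℝ) (k : ℕ) :
    ∃ I J : Finset (Fin n), #I ≤ heavyMass A k + heavyMass Aᵀ k ∧
      #J ≤ heavyMass Aᵀ k + heavyMass A k ∧
      (∀ i, countOnes (zeroSub A I J i) ≤ k) ∧ ∀ j, countOnes ((zeroSub A I J)ᵀ j) ≤ k :=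
  ⟨_, _, card_regularizingRows_le A k, card_regularizingRows_le Aᵀ k,
    countOnes_zeroSub_regularizingRows_le A k, countOnes_transpose_zeroSub_regularizingRows_le A k⟩

end

section Numerics

lemma pow_div_factorial_le_of_le {x : ℝ} (hx : 0 ≤ x) {K k : ℕ} (hK : 0 < K) (hKk : K ≤ k) :
    x ^ k / k ! ≤ K ^ K / K ! * (x / K) ^ k := by
  obtain ⟨d, rfl⟩ := Nat.exists_eq_add_of_le hKk
  have hfac : (K ! * K ^ d : ℝ) ≤ (K + d)! := by
    have := Nat.factorial_mul_pow_sub_le_factorial hKk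
    rw [Nat.add_sub_cancel_left] at this
    exact_mod_cast this
  have hK0 : (K : ℝ) ≠ 0 := by positivity
  calc x ^ (K + d) / (K + d)! ≤ x ^ (K + d) / (K ! * K ^ d) := by gcongr
    _ = K ^ K / K ! * (x / K) ^ (K + d) := by rw [div_pow, pow_add (K : ℝ)]; field_simp

lemma self_pow_div_factorial_le {K : ℕ} (hK : 0 < K) : (K : ℝ) ^ K / K ! ≤ 2 / 5 * exp 1 ^ K := by
  have hsqrt : (5 / 2 : ℝ) ≤ √(2 * π * K) := by
    have : (1 : ℝ) ≤ K := by exact_mod_cast hK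
    rw [Real.le_sqrt (by norm_num) (by positivity)]
    nlinarith [pi_gt_d2]
  have hstirling := Stirling.le_factorial_stirling K
  rw [div_pow, ← mul_div_assoc, div_le_iff₀ (by positivity)] at hstirling
  rw [div_le_iff₀ (by positivity)]
  nlinarith [pow_pos (exp_pos 1) K, pow_pos (show (0 : ℝ) < K by exact_mod_cast hK) K]

lemma exp_nine_quarters_lt : exp (9 / 4) < 21 / 2 := by
  have hquarter : exp (1 / 4) ≤ 4 / 3 := by
    convert exp_bound_div_one_sub_of_interval (x := 1 / 4) (by norm_num) (by norm_num) using 1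
    norm_num
  have hsplit : exp (9 / 4) = exp 1 ^ 2 * exp (1 / 4) := by
    rw [← exp_nat_mul, ← exp_add]; norm_num
  rw [hsplit]
  nlinarith [exp_one_lt_d9, exp_pos 1, exp_pos (1 / 4)]

lemma sum_exp_mul_choose_mul_pow_le (n : ℕ) {p ε : ℝ} (hp : 0 ≤ p) (hε0 : 0 < ε) (hε1 : ε ≤ 1) :
    ∑ k ∈ Icc (⌊21 * p * n + 4 * log ε⁻¹⌋₊ + 1) n, exp k * n.choose k * p ^ k ≤ ε / 4 := by
  set m := 21 * p * n + 4 * log ε⁻¹ with hm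
  set K := ⌊m⌋₊ + 1
  set q := exp 1 / 21
  have hlog : 0 ≤ log ε⁻¹ := log_nonneg ((one_le_inv₀ hε0).2 hε1)
  have hmK : m < K := by exact_mod_cast Nat.lt_floor_add_one m
  have hK : 0 < K := Nat.succ_pos _
  have hq0 : 0 ≤ q := by positivity
  have hq : q ≤ 1 / 5 := by have := exp_one_lt_d9; norm_num [q] at this ⊢; linarith
  have hratio : exp 1 * (n * p) / K ≤ q := by
    rw [div_le_iff₀ (by positivity)]
    have : 21 * (n * p) ≤ K := by linarith
    calc exp 1 * (n * p) = q * (21 * (n * p)) := by ring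
      _ ≤ q * K := by gcongr
  have hterm : ∀ k ∈ Icc K n, exp k * n.choose k * p ^ k ≤ K ^ K / K ! * q ^ k := by
    intro k hk
    calc exp k * n.choose k * p ^ k ≤ exp 1 ^ k * (n ^ k / k !) * p ^ k := by
          rw [← exp_nat_mul, mul_one]; gcongr; exact Nat.choose_le_pow_div k n
      _ = (exp 1 * (n * p)) ^ k / k ! := by ring
      _ ≤ K ^ K / K ! * (exp 1 * (n * p) / K) ^ k :=
          pow_div_factorial_le_of_le (by positivity) hK (mem_Icc.1 hk).1
      _ ≤ K ^ K / K ! * q ^ k := by gcongr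
  have hgeom : ∑ k ∈ Icc K n, q ^ k ≤ q ^ K / (1 - q) := by
    rw [← Ico_add_one_right_eq_Icc]
    exact geom_sum_Ico_le_of_lt_one hq0 (by linarith)
  have hεK : exp (-(K / 4)) ≤ ε := by
    calc exp (-(K / 4)) ≤ exp (log ε) := by
          rw [log_inv] at hm; gcongr; linarith [show 0 ≤ 21 * p * n by positivity]
      _ = ε := exp_log hε0
  set r := exp (9 / 4) / 21
  have hr : r ^ K ≤ 1 / 2 := by
    have : r < 1 / 2 := by have := exp_nine_quarters_lt; simp only [r]; linarith
    calc r ^ K ≤ r := pow_le_of_le_one (by positivity) (by linarith) hK.ne'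
      _ ≤ 1 / 2 := this.le
  have hqe : (q * exp 1) ^ K = r ^ K * exp (-(K / 4)) := by
    have hbase : q * exp 1 = r * exp (-(1 / 4)) := by
      simp only [q, r]
      rw [div_mul_eq_mul_div, div_mul_eq_mul_div, ← exp_add, ← exp_add]
      norm_num
    rw [hbase, mul_pow, ← exp_nat_mul]
    ring_nf
  calc ∑ k ∈ Icc K n, exp k * n.choose k * p ^ k ≤ ∑ k ∈ Icc K n, K ^ K / K ! * q ^ k :=
        sum_le_sum hterm
    _ = K ^ K / K ! * ∑ k ∈ Icc K n, q ^ k := (mul_sum ..).symm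
    _ ≤ 2 / 5 * exp 1 ^ K * (q ^ K / (1 - q)) := by
        gcongr
        exact self_pow_div_factorial_le hK
    _ = 2 / 5 * (q * exp 1) ^ K / (1 - q) := by ring
    _ ≤ exp (-(K / 4)) / 4 := by
        rw [hqe, div_le_iff₀ (by linarith)]
        nlinarith [exp_pos (-(K / 4 : ℝ))]
    _ ≤ ε / 4 := by gcongr

end Numerics

section Probability

variable {Ω : Type*} [MeasurableSpace Ω] {P : Measure Ω}

theorem ProbabilityTheory.iIndepFun.curry {ι κ 𝓧 : Type*} [MeasurableSpace 𝓧]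
    {X : ι → κ → Ω → 𝓧} (mX : ∀ i j, Measurable (X i j))
    (h : iIndepFun (fun p : ι × κ => X p.1 p.2) P) : iIndepFun (fun i ω j => X i j ω) P := by
  have := h.isProbabilityMeasure
  have _ i j : IsProbabilityMeasure (P.map (X i j)) :=
    Measure.isProbabilityMeasure_map (mX i j).aemeasurable
  have hrow i : P.map (fun ω j => X i j ω) = Measure.infinitePi fun j => P.map (X i j) :=
    (h.precomp (Prod.mk_right_injective i)).map_fun_eq_infinitePi_map (mX i)
  rw [iIndepFun_iff_map_fun_eq_infinitePi_map fun i => measurable_pi_lambda _ (mX i)]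
  calc P.map (fun ω i j => X i j ω)
      = (P.map fun ω (p : ι × κ) => X p.1 p.2 ω).map (MeasurableEquiv.curry ι κ 𝓧) := by
        rw [Measure.map_map (by fun_prop) (by fun_prop)]
        rfl
    _ = Measure.infinitePi fun i => Measure.infinitePi fun j => P.map (X i j) := by
        rw [h.map_fun_eq_infinitePi_map (X := fun p : ι × κ => X p.1 p.2) fun p => mX p.1 p.2]
        exact Measure.infinitePi_map_curry fun i j => P.map (X i j)
    _ = Measure.infinitePi fun i => P.map fun ω j => X i j ω := by simp_rw [hrow]

variable {κ : Type*} [Fintype κ]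

lemma measurable_countOnes : Measurable (countOnes : (κ → ℝ) → ℕ) := by
  classical
  have : countOnes = fun v : κ → ℝ => ∑ j, if v j = 1 then 1 else 0 := by
    funext v; exact card_filter _ _
  rw [this]
  exact Finset.measurable_sum _ fun j _ =>
    Measurable.ite (measurable_pi_apply j (measurableSet_singleton 1)) measurable_const
      measurable_const

lemma measure_le_countOnes_le {Y : κ → Ω → ℝ} (hY : iIndepFun Y P) {q : ℝ≥0∞}
    (hq : ∀ j, P {ω | Y j ω = 1} ≤ q) (k : ℕ) :
    P {ω | k ≤ countOnes fun j => Y j ω} ≤ (Fintype.card κ).choose k * q ^ k := by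
  classical
  have hcover : {ω | k ≤ countOnes fun j => Y j ω} ⊆
      ⋃ A ∈ powersetCard k (univ : Finset κ), ⋂ j ∈ A, Y j ⁻¹' {1} := by
    intro ω hω
    obtain ⟨A, hA, hAcard⟩ := exists_subset_card_eq hω
    refine Set.mem_iUnion₂.2 ⟨A, mem_powersetCard.2 ⟨subset_univ A, hAcard⟩, ?_⟩
    exact Set.mem_iInter₂.2 fun j hj => (mem_filter.1 (hA hj)).2
  calc P {ω | k ≤ countOnes fun j => Y j ω}
      ≤ ∑ A ∈ powersetCard k (univ : Finset κ), P (⋂ j ∈ A, Y j ⁻¹' {1}) :=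
        (measure_mono hcover).trans (measure_biUnion_finset_le _ _)
    _ = ∑ A ∈ powersetCard k (univ : Finset κ), ∏ j ∈ A, P (Y j ⁻¹' {1}) :=
        sum_congr rfl fun A _ =>
          hY.measure_inter_preimage_eq_mul A fun _ _ => measurableSet_singleton 1
    _ ≤ ∑ A ∈ powersetCard k (univ : Finset κ), q ^ k := by
        refine sum_le_sum fun A hA => ?_
        rw [← (mem_powersetCard.1 hA).2, ← prod_const]
        exact prod_le_prod' fun j _ => hq j
    _ = (Fintype.card κ).choose k * q ^ k := by
        rw [sum_const, card_powersetCard, card_univ, nsmul_eq_mul]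

def excess (K r : ℕ) : ℕ := if K < r then r else 0

lemma lintegral_exp_excess_le [IsProbabilityMeasure P] {R : Ω → ℕ} (hR : Measurable R) {N : ℕ}
    (hRN : ∀ ω, R ω ≤ N) (K : ℕ) :
    ∫⁻ ω, ENNReal.ofReal (exp (excess K (R ω))) ∂P ≤
      1 + ∑ k ∈ Icc (K + 1) N, ENNReal.ofReal (exp k) * P {ω | k ≤ R ω} := by
  have hset (k : ℕ) : MeasurableSet {ω | k ≤ R ω} := hR measurableSet_Ici
  have hpoint (ω : Ω) : ENNReal.ofReal (exp (excess K (R ω))) ≤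
      1 + ∑ k ∈ Icc (K + 1) N, {ω' | k ≤ R ω'}.indicator (fun _ => ENNReal.ofReal (exp k)) ω := by
    unfold excess
    split_ifs with h
    · calc ENNReal.ofReal (exp (R ω))
          = {ω' | R ω ≤ R ω'}.indicator (fun _ => ENNReal.ofReal (exp (R ω))) ω := by simp
        _ ≤ ∑ k ∈ Icc (K + 1) N, {ω' | k ≤ R ω'}.indicator (fun _ => ENNReal.ofReal (exp k)) ω :=
            single_le_sum
              (f := fun k : ℕ => {ω' | k ≤ R ω'}.indicator (fun _ => ENNReal.ofReal (exp k)) ω)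
              (fun _ _ => zero_le) (mem_Icc.2 ⟨h, hRN ω⟩)
        _ ≤ _ := le_add_self
    · simp
  calc ∫⁻ ω, ENNReal.ofReal (exp (excess K (R ω))) ∂P
      ≤ ∫⁻ ω, 1 + ∑ k ∈ Icc (K + 1) N,
          {ω' | k ≤ R ω'}.indicator (fun _ => ENNReal.ofReal (exp k)) ω ∂P := lintegral_mono hpoint
    _ = 1 + ∑ k ∈ Icc (K + 1) N, ENNReal.ofReal (exp k) * P {ω | k ≤ R ω} := by
        rw [lintegral_add_left measurable_const,
          lintegral_finsetSum _ fun k _ => measurable_const.indicator (hset k)]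
        simp [lintegral_indicator_const (hset _)]

lemma measure_sum_ge_le_prod_lintegral_exp_div {ι : Type*} [Fintype ι] {Z : ι → Ω → ℝ}
    (hZ : iIndepFun Z P) (hmeas : ∀ i, Measurable (Z i)) (t : ℝ) :
    P {ω | t ≤ ∑ i, Z i ω} ≤
      (∏ i, ∫⁻ ω, ENNReal.ofReal (exp (Z i ω)) ∂P) / ENNReal.ofReal (exp t) := by
  have hexp : iIndepFun (fun i ω => ENNReal.ofReal (exp (Z i ω))) P :=
    hZ.comp (fun _ x => ENNReal.ofReal (exp x)) fun _ => by fun_prop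
  have hmeas' (i : ι) : Measurable fun ω => ENNReal.ofReal (exp (Z i ω)) := by fun_prop
  calc P {ω | t ≤ ∑ i, Z i ω}
      = P {ω | ENNReal.ofReal (exp t) ≤ ∏ i, ENNReal.ofReal (exp (Z i ω))} := by
        congr 1; ext ω
        rw [Set.mem_ofPred_eq, Set.mem_ofPred_eq,
          ← ENNReal.ofReal_prod_of_nonneg fun i _ => (exp_pos _).le, ← exp_sum,
          ENNReal.ofReal_le_ofReal_iff (exp_pos _).le, exp_le_exp]
    _ ≤ (∫⁻ ω, ∏ i, ENNReal.ofReal (exp (Z i ω)) ∂P) / ENNReal.ofReal (exp t) :=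
        meas_ge_le_lintegral_div (Finset.measurable_prod _ fun i _ => hmeas' i).aemeasurable
          (ENNReal.ofReal_pos.2 (exp_pos t)).ne' ENNReal.ofReal_ne_top
    _ = _ := by rw [lintegral_prod_eq_prod_lintegral_of_indepFun _ _ hexp hmeas']


lemma lintegral_exp_excess_countOnes_le [IsProbabilityMeasure P] {n : ℕ} {Y : Fin n → Ω → ℝ}
    (hY : iIndepFun Y P) (hmeas : ∀ j, Measurable (Y j)) {p ε : ℝ} (hp : 0 ≤ p)
    (hber : ∀ j, P {ω | Y j ω = 1} ≤ ENNReal.ofReal p) (hε0 : 0 < ε) (hε1 : ε ≤ 1) :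
    ∫⁻ ω, ENNReal.ofReal (exp (excess ⌊21 * p * n + 4 * log ε⁻¹⌋₊ (countOnes fun j => Y j ω))) ∂P
      ≤ ENNReal.ofReal (1 + ε / 4) := by
  set K := ⌊21 * p * n + 4 * log ε⁻¹⌋₊
  have hR : Measurable fun ω => countOnes fun j => Y j ω :=
    measurable_countOnes.comp (measurable_pi_lambda _ hmeas)
  have hRn (ω : Ω) : (countOnes fun j => Y j ω) ≤ n := (card_filter_le _ _).trans_eq (card_fin n)
  calc _ ≤ 1 + ∑ k ∈ Icc (K + 1) n, ENNReal.ofReal (exp k) * P {ω | k ≤ countOnes fun j => Y j ω} :=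
        lintegral_exp_excess_le hR hRn K
    _ ≤ 1 + ∑ k ∈ Icc (K + 1) n, ENNReal.ofReal (exp k) * (n.choose k * ENNReal.ofReal p ^ k) := by
        gcongr with k
        simpa using measure_le_countOnes_le hY hber k
    _ = ENNReal.ofReal (1 + ∑ k ∈ Icc (K + 1) n, exp k * n.choose k * p ^ k) := by
        rw [ENNReal.ofReal_add zero_le_one (sum_nonneg fun k _ => by positivity),
          ENNReal.ofReal_one, ENNReal.ofReal_sum_of_nonneg fun k _ => by positivity]
        congr 1
        refine sum_congr rfl fun k _ => ?_
        rw [ENNReal.ofReal_mul (by positivity), ENNReal.ofReal_mul (exp_pos _).le,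
          ENNReal.ofReal_natCast, ENNReal.ofReal_pow hp, mul_assoc]
    _ ≤ ENNReal.ofReal (1 + ε / 4) := by
        gcongr
        exact sum_exp_mul_choose_mul_pow_le n hp hε0 hε1

lemma measure_le_heavyMass_le [IsProbabilityMeasure P] {n : ℕ} {X : Ω → Matrix (Fin n) (Fin n) ℝ}
    (hmeas : ∀ i j, Measurable fun ω => X ω i j)
    (hindep : iIndepFun (fun q : Fin n × Fin n => fun ω => X ω q.1 q.2) P) {p ε : ℝ} (hp : 0 ≤ p)
    (hber : ∀ i j, P {ω | X ω i j = 1} ≤ ENNReal.ofReal p) (hε0 : 0 < ε) (hε1 : ε ≤ 1) :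
    P {ω | ε * n / 2 ≤ heavyMass (X ω) ⌊21 * p * n + 4 * log ε⁻¹⌋₊} ≤
      ENNReal.ofReal (exp (-(ε * n) / 4)) := by
  set K := ⌊21 * p * n + 4 * log ε⁻¹⌋₊
  set Z : Fin n → Ω → ℝ := fun i ω => excess K (countOnes (X ω i))
  have hrows : iIndepFun (fun i ω => X ω i) P := hindep.curry (X := fun i j ω => X ω i j) hmeas
  have hZ : iIndepFun Z P :=
    hrows.comp (fun _ v => (excess K (countOnes v) : ℝ)) fun _ =>
      (measurable_from_nat (f := fun r => (excess K r : ℝ))).comp measurable_countOnes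
  have hZmeas (i : Fin n) : Measurable (Z i) :=
    (measurable_from_nat (f := fun r => (excess K r : ℝ))).comp
      (measurable_countOnes.comp (measurable_pi_lambda _ (hmeas i)))
  have hmass (ω : Ω) : (heavyMass (X ω) K : ℝ) = ∑ i, Z i ω := by
    simp only [heavyMass, heavyRows, sum_filter, Z, excess]
    push_cast
    rfl
  have hmom (i : Fin n) : ∫⁻ ω, ENNReal.ofReal (exp (Z i ω)) ∂P ≤ ENNReal.ofReal (1 + ε / 4) :=
    lintegral_exp_excess_countOnes_le (hindep.precomp (Prod.mk_right_injective i)) (hmeas i) hp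
      (hber i) hε0 hε1
  calc P {ω | ε * n / 2 ≤ heavyMass (X ω) K} = P {ω | ε * n / 2 ≤ ∑ i, Z i ω} := by
        simp_rw [hmass]
    _ ≤ (∏ i, ∫⁻ ω, ENNReal.ofReal (exp (Z i ω)) ∂P) / ENNReal.ofReal (exp (ε * n / 2)) :=
        measure_sum_ge_le_prod_lintegral_exp_div hZ hZmeas _
    _ ≤ ENNReal.ofReal (1 + ε / 4) ^ n / ENNReal.ofReal (exp (ε * n / 2)) := by
        gcongr
        exact (prod_le_prod' fun i _ => hmom i).trans_eq (by simp)
    _ ≤ ENNReal.ofReal (exp (ε * n / 4)) / ENNReal.ofReal (exp (ε * n / 2)) := by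
        gcongr
        rw [← ENNReal.ofReal_pow (by positivity)]
        gcongr
        calc (1 + ε / 4) ^ n ≤ exp (ε / 4) ^ n := by
              gcongr; linarith [add_one_le_exp (ε / 4)]
          _ = exp (ε * n / 4) := by rw [← exp_nat_mul]; ring_nf
    _ = ENNReal.ofReal (exp (-(ε * n) / 4)) := by
        rw [← ENNReal.ofReal_div_of_pos (exp_pos _), ← exp_sub]
        ring_nf

lemma ofReal_one_sub_two_mul_le_measure [IsProbabilityMeasure P] {E S T : Set Ω} {a : ℝ}
    (ha : 0 ≤ a) (hcover : Eᶜ ⊆ S ∪ T) (hS : P S ≤ ENNReal.ofReal a) (hT : P T ≤ ENNReal.ofReal a) :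
    ENNReal.ofReal (1 - 2 * a) ≤ P E := by
  rw [ENNReal.ofReal_sub _ (by positivity), ENNReal.ofReal_one, tsub_le_iff_right, two_mul,
    ENNReal.ofReal_add ha ha]
  calc 1 = P (E ∪ Eᶜ) := by rw [Set.union_compl_self, measure_univ]
    _ ≤ P E + P (S ∪ T) := (measure_union_le _ _).trans (by gcongr)
    _ ≤ P E + (ENNReal.ofReal a + ENNReal.ofReal a) := by
        gcongr
        exact (measure_union_le _ _).trans (add_le_add hS hT)

end Probability

open Classical in
theorem bernoulli_regularization_general
    (n : ℕ) (Ω : Type) [MeasureSpace Ω] [IsProbabilityMeasure (ℙ : Measure Ω)]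
    (p : ℝ) (hp0 : 0 ≤ p)
    (B : Ω → Matrix (Fin n) (Fin n) ℝ)
    (hmeas : ∀ i j, Measurable fun ω => B ω i j)
    (hindep : iIndepFun
      (fun q : Fin n × Fin n => fun ω => B ω q.1 q.2) ℙ)
    (hber : ∀ i j, ℙ {ω | B ω i j = 1} = ENNReal.ofReal p)
    (ε : ℝ) (hε0 : 0 < ε) (hε1 : ε ≤ 1) :
    ENNReal.ofReal (1 - 2 * Real.exp (-(ε * n) / 4)) ≤
      ℙ {ω | ∃ I J : Finset (Fin n), (I.card : ℝ) ≤ ε * n ∧ (J.card : ℝ) ≤ ε * n ∧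
        (∀ i, ((Finset.univ.filter fun j => zeroSub (B ω) I J i j = 1).card : ℝ) ≤
          21 * p * n + 4 * Real.log ε⁻¹) ∧
        (∀ j, ((Finset.univ.filter fun i => zeroSub (B ω) I J i j = 1).card : ℝ) ≤
          21 * p * n + 4 * Real.log ε⁻¹)} := by
  set m := 21 * p * n + 4 * Real.log ε⁻¹
  have hm : 0 ≤ m := by have := log_nonneg ((one_le_inv₀ hε0).2 hε1); positivity
  have hber' (i j : Fin n) : ℙ {ω | B ω i j = 1} ≤ ENNReal.ofReal p := (hber i j).le
  refine ofReal_one_sub_two_mul_le_measure (exp_pos _).le (fun ω hω => ?_)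
    (measure_le_heavyMass_le hmeas hindep hp0 hber' hε0 hε1)
    (measure_le_heavyMass_le (X := fun ω => (B ω)ᵀ) (fun i j => hmeas j i)
      (hindep.precomp Prod.swap_injective) hp0 (fun i j => hber' j i) hε0 hε1)
  by_contra hsparse
  simp only [Set.mem_union, Set.mem_ofPred_eq, not_or, not_le] at hsparse
  obtain ⟨I, J, hI, hJ, hrow, hcol⟩ := exists_zeroSub_countOnes_le (B ω) ⌊m⌋₊
  refine hω ⟨I, J, ?_, ?_, fun i => ?_, fun j => ?_⟩
  · have : (#I : ℝ) ≤ heavyMass (B ω) ⌊m⌋₊ + heavyMass (B ω)ᵀ ⌊m⌋₊ := by exact_mod_cast hI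
    linarith
  · have : (#J : ℝ) ≤ heavyMass (B ω)ᵀ ⌊m⌋₊ + heavyMass (B ω) ⌊m⌋₊ := by exact_mod_cast hJ
    linarith
  · exact (Nat.cast_le.2 (hrow i)).trans (Nat.floor_le hm)
  · exact (Nat.cast_le.2 (hcol j)).trans (Nat.floor_le hm)

open Classical in
/-- **Bernoulli random matrix, regularization.** Let `B` be an `n × n` random matrix with
independent Bernoulli(`p`) entries and `ε ∈ (0,1]`. Then with probability at least
`1 - 2 exp(-εn/4)` one can zero out an `εn × εn` submatrix of `B` so that every row and every
column of the resulting matrix `B̃` contains at most `21pn + 4 ln ε⁻¹` ones. -/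
theorem bernoulli_regularization
    (n : ℕ) (Ω : Type) [MeasureSpace Ω] [IsProbabilityMeasure (ℙ : Measure Ω)]
    (p : ℝ) (hp0 : 0 ≤ p) (hp1 : p ≤ 1)
    (B : Ω → Matrix (Fin n) (Fin n) ℝ)
    (hmeas : ∀ i j, Measurable fun ω => B ω i j)
    (hindep : iIndepFun
      (fun q : Fin n × Fin n => fun ω => B ω q.1 q.2) ℙ)
    (h01 : ∀ i j, ∀ᵐ ω ∂ℙ, B ω i j = 0 ∨ B ω i j = 1)
    (hber : ∀ i j, ℙ {ω | B ω i j = 1} = ENNReal.ofReal p)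
    (ε : ℝ) (hε0 : 0 < ε) (hε1 : ε ≤ 1) :
    ENNReal.ofReal (1 - 2 * Real.exp (-(ε * n) / 4)) ≤
      ℙ {ω | ∃ I J : Finset (Fin n), (I.card : ℝ) ≤ ε * n ∧ (J.card : ℝ) ≤ ε * n ∧
        (∀ i, ((Finset.univ.filter fun j => zeroSub (B ω) I J i j = 1).card : ℝ) ≤
          21 * p * n + 4 * Real.log ε⁻¹) ∧
        (∀ j, ((Finset.univ.filter fun i => zeroSub (B ω) I J i j = 1).card : ℝ) ≤
          21 * p * n + 4 * Real.log ε⁻¹)} :=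
  bernoulli_regularization_general n Ω p hp0 B hmeas hindep hber ε hε0 hε1
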